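/- Let E = ℝⁿ, let 0 ≤ L < 1, and let G : E → E be L-Lipschitz. Suppose (x₁, y₁) and (x₂, y₂) in E × E satisfy x₁ − y₁ = G(x₁ + y₁) and x₂ − y₂ = G(x₂ + y₂). Then ‖y₁ − y₂‖ ≤ ((1 + L)/(1 − L))‖x₁ − x₂‖. In particular, the monotone formulation of G is ((1 + L)/(1 − L))-Lipschitz. -/

import Mathlib

section CayleyOperator

variable {E : Type*} [SeminormedAddCommGroup E]

theorem norm_le_of_norm_sub_le_mul_norm_add {L : ℝ} (hL0 : 0 ≤ L) (hL1 : L < 1) {a b : E}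
    (h : ‖a - b‖ ≤ L * ‖a + b‖) : ‖b‖ ≤ (1 + L) / (1 - L) * ‖a‖ := by
  have hb : ‖b‖ ≤ ‖a‖ + ‖a - b‖ := by
    simpa using norm_sub_le a (a - b)
  have hab : L * ‖a + b‖ ≤ L * (‖a‖ + ‖b‖) :=
    mul_le_mul_of_nonneg_left (norm_add_le a b) hL0
  rw [div_mul_eq_mul_div, le_div_iff₀ (sub_pos.mpr hL1)]
  linarith

theorem norm_sub_le_mul_norm_add_of_cayley {L : ℝ} {G : E → E}
    (hG : ∀ x y, ‖G x - G y‖ ≤ L * ‖x - y‖) {x₁ y₁ x₂ y₂ : E}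
    (h₁ : x₁ - y₁ = G (x₁ + y₁)) (h₂ : x₂ - y₂ = G (x₂ + y₂)) :
    ‖(x₁ - x₂) - (y₁ - y₂)‖ ≤ L * ‖(x₁ - x₂) + (y₁ - y₂)‖ := by
  have hdiff : (x₁ - x₂) - (y₁ - y₂) = G (x₁ + y₁) - G (x₂ + y₂) := by
    rw [← h₁, ← h₂]; abel
  have hsum : (x₁ - x₂) + (y₁ - y₂) = (x₁ + y₁) - (x₂ + y₂) := by abel
  rw [hdiff, hsum]
  exact hG _ _

end CayleyOperator

/-- The monotone operator whose Cayley operator is an `L`-Lipschitz function `G`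
(`0 ≤ L < 1`) is `((1 + L)/(1 - L))`-Lipschitz. -/
theorem monotone_formulation_lipschitz
    (n : ℕ) (L : ℝ) (hL0 : 0 ≤ L) (hL1 : L < 1)
    (G : EuclideanSpace ℝ (Fin n) → EuclideanSpace ℝ (Fin n))
    (hG : ∀ x y, ‖G x - G y‖ ≤ L * ‖x - y‖)
    (x₁ y₁ x₂ y₂ : EuclideanSpace ℝ (Fin n))
    (h₁ : x₁ - y₁ = G (x₁ + y₁)) (h₂ : x₂ - y₂ = G (x₂ + y₂)) :
    ‖y₁ - y₂‖ ≤ ((1 + L) / (1 - L)) * ‖x₁ - x₂‖ :=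
  norm_le_of_norm_sub_le_mul_norm_add hL0 hL1
    (norm_sub_le_mul_norm_add_of_cayley hG h₁ h₂)
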